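/- Let μ, ν ∈ P_1(ℝ) have cumulative distribution functions F_μ and F_ν, let U be uniformly distributed on [0,1], and let γ̄ be the law of (F_μ†(U), F_ν†(U)). Then γ̄ is a coupling of μ and ν which is optimal for W_1, and moreover W_1(μ,ν) = ∫_{−∞}^{∞} |F_μ(t) − F_ν(t)| dt. -/

import Mathlib

noncomputable section

open MeasureTheory ENNReal

/-- `γ` is a coupling of `μ` and `ν`: its first marginal is `μ`, its second marginal is `ν`. -/
def IsCoupling (γ : Measure (ℝ × ℝ)) (μ ν : Measure ℝ) : Prop :=
  γ.map Prod.fst = μ ∧ γ.map Prod.snd = ν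

/-- The transport cost `∫ |x - y| dγ(x,y)` of a coupling `γ`. -/
def transportCost (γ : Measure (ℝ × ℝ)) : ℝ≥0∞ :=
  ∫⁻ z, (‖z.1 - z.2‖₊ : ℝ≥0∞) ∂γ

/-- The `1`-Wasserstein distance `W_1(μ,ν) = inf_{γ ∈ Γ(μ,ν)} ∫ |x-y| dγ` on the line. -/
def wassersteinOne (μ ν : Measure ℝ) : ℝ≥0∞ :=
  ⨅ γ : {γ : Measure (ℝ × ℝ) // IsCoupling γ μ ν}, transportCost (γ : Measure (ℝ × ℝ))

/-- `μ` has a finite first moment, i.e. `μ ∈ P_1(ℝ)`. -/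
def finiteFirstMoment (μ : Measure ℝ) : Prop :=
  ∫⁻ x, (‖x‖₊ : ℝ≥0∞) ∂μ ≠ ∞

/-- The cumulative distribution function `F_μ(t) = μ((-∞, t])`. -/
def cdf (μ : Measure ℝ) (t : ℝ) : ℝ :=
  (μ (Set.Iic t)).toReal

/-- The quantile function (pseudo-inverse of the CDF): `F_μ†(u) = inf {t | F_μ(t) ≥ u}`. -/
def quantile (μ : Measure ℝ) (u : ℝ) : ℝ :=
  sInf {t : ℝ | u ≤ cdf μ t}

/-- The law of `(F_μ†(U), F_ν†(U))` where `U` is uniform on `[0,1]`. -/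
def quantileCoupling (μ ν : Measure ℝ) : Measure (ℝ × ℝ) :=
  Measure.map (fun u => (quantile μ u, quantile ν u)) (volume.restrict (Set.Icc (0 : ℝ) 1))

open Set Filter Topology

namespace OneDimOT

variable (μ : Measure ℝ) [IsProbabilityMeasure μ]

lemma cdf_eqP (t : ℝ) : cdf μ t = ProbabilityTheory.cdf μ t :=
  (ProbabilityTheory.cdf_eq_real μ t).symm

lemma cdf_mono : Monotone (cdf μ) := by
  intro s t hst
  rw [cdf_eqP, cdf_eqP]
  exact ProbabilityTheory.monotone_cdf μ hst

lemma cdf_nonneg (t : ℝ) : 0 ≤ cdf μ t := ENNReal.toReal_nonneg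

lemma cdf_le_one (t : ℝ) : cdf μ t ≤ 1 := by
  rw [cdf_eqP]; exact ProbabilityTheory.cdf_le_one μ t

lemma ofReal_cdf' (t : ℝ) : ENNReal.ofReal (cdf μ t) = μ (Set.Iic t) :=
  ENNReal.ofReal_toReal (measure_ne_top μ _)

lemma quantile_le_iff {u : ℝ} (hu0 : 0 < u) (hu1 : u < 1) {t : ℝ} :
    quantile μ u ≤ t ↔ u ≤ cdf μ t := by
  set S : Set ℝ := {s : ℝ | u ≤ cdf μ s} with hS
  have hSmem : ∀ s, s ∈ S ↔ u ≤ cdf μ s := fun s => Iff.rfl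
  have hne : S.Nonempty := by
    have h : ∀ᶠ s in atTop, u ≤ ProbabilityTheory.cdf μ s :=
      (ProbabilityTheory.tendsto_cdf_atTop μ).eventually_const_le hu1
    obtain ⟨s, hs⟩ := h.exists
    exact ⟨s, by rw [hSmem, cdf_eqP]; exact hs⟩
  have hbdd : BddBelow S := by
    have h : ∀ᶠ s in atBot, ProbabilityTheory.cdf μ s < u :=
      (ProbabilityTheory.tendsto_cdf_atBot μ).eventually_lt_const hu0
    obtain ⟨s0, hs0⟩ := h.exists
    refine ⟨s0, fun s hs => ?_⟩
    by_contra hlt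
    push_neg at hlt
    have h1 : cdf μ s ≤ cdf μ s0 := cdf_mono μ hlt.le
    have h2 : u ≤ cdf μ s := (hSmem s).mp hs
    have h3 : cdf μ s0 < u := by rw [cdf_eqP]; exact hs0
    linarith
  have hmemInf : u ≤ cdf μ (sInf S) := by
    have htend : Tendsto (cdf μ) (𝓝[>] (sInf S)) (𝓝 (cdf μ (sInf S))) := by
      have : Tendsto (ProbabilityTheory.cdf μ) (𝓝[≥] (sInf S))
          (𝓝 (ProbabilityTheory.cdf μ (sInf S))) :=
        ((ProbabilityTheory.cdf μ).right_continuous (sInf S)).tendsto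
      have h2 := this.mono_left (nhdsWithin_mono _ Ioi_subset_Ici_self)
      simpa only [funext (cdf_eqP μ)] using h2
    refine ge_of_tendsto htend ?_
    filter_upwards [eventually_mem_nhdsWithin] with s hs
    obtain ⟨s', hs'S, hs'lt⟩ := (csInf_lt_iff hbdd hne).mp hs
    exact le_trans ((hSmem s').mp hs'S) (cdf_mono μ hs'lt.le)
  constructor
  · intro h
    exact hmemInf.trans (cdf_mono μ h)
  · intro h
    exact csInf_le hbdd ((hSmem t).mpr h)

lemma quantile_monoOn : MonotoneOn (quantile μ) (Ioo (0:ℝ) 1) := by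
  intro u hu v hv huv
  rw [quantile_le_iff μ hu.1 hu.2]
  exact huv.trans ((quantile_le_iff μ hv.1 hv.2).mp le_rfl)

lemma quantile_aemeas : AEMeasurable (quantile μ) (volume.restrict (Ioo (0:ℝ) 1)) :=
  aemeasurable_restrict_of_monotoneOn measurableSet_Ioo (quantile_monoOn μ)

lemma restrict_Icc_eq : volume.restrict (Icc (0:ℝ) 1) = volume.restrict (Ioo (0:ℝ) 1) :=
  (Measure.restrict_congr_set Ioo_ae_eq_Icc).symm

lemma vol_Ioo_inter_Iic {c : ℝ} (h0 : 0 ≤ c) (h1 : c ≤ 1) :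
    volume (Ioo (0:ℝ) 1 ∩ Iic c) = ENNReal.ofReal c := by
  apply le_antisymm
  · refine (measure_mono (fun u hu => ?_)).trans_eq (by rw [Real.volume_Ioc, sub_zero] : volume (Ioc (0:ℝ) c) = ENNReal.ofReal c)
    exact ⟨hu.1.1, hu.2⟩
  · have hsub : Ioo (0:ℝ) c ⊆ Ioo (0:ℝ) 1 ∩ Iic c := fun u hu =>
      ⟨⟨hu.1, lt_of_lt_of_le hu.2 h1⟩, hu.2.le⟩
    calc ENNReal.ofReal c = volume (Ioo (0:ℝ) c) := by rw [Real.volume_Ioo, sub_zero]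
    _ ≤ _ := measure_mono hsub

lemma map_quantile : Measure.map (quantile μ) (volume.restrict (Ioo (0:ℝ) 1)) = μ := by
  have hprob : IsProbabilityMeasure (Measure.map (quantile μ) (volume.restrict (Ioo (0:ℝ) 1))) := by
    constructor
    rw [Measure.map_apply_of_aemeasurable (quantile_aemeas μ) MeasurableSet.univ]
    simp
  refine Measure.ext_of_Iic _ _ (fun t => ?_)
  rw [Measure.map_apply_of_aemeasurable (quantile_aemeas μ) measurableSet_Iic,
    Measure.restrict_apply' measurableSet_Ioo]
  have hset : quantile μ ⁻¹' Iic t ∩ Ioo 0 1 = Ioo (0:ℝ) 1 ∩ Iic (cdf μ t) := by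
    ext u
    simp only [mem_inter_iff, mem_preimage, mem_Iic, mem_Ioo]
    constructor
    · rintro ⟨h, h0, h1⟩
      exact ⟨⟨h0, h1⟩, (quantile_le_iff μ h0 h1).mp h⟩
    · rintro ⟨⟨h0, h1⟩, h⟩
      exact ⟨(quantile_le_iff μ h0 h1).mpr h, h0, h1⟩
  rw [hset, vol_Ioo_inter_Iic (cdf_nonneg μ t) (cdf_le_one μ t), ofReal_cdf']


variable (ν : Measure ℝ) [IsProbabilityMeasure ν]

lemma pair_aemeas : AEMeasurable (fun u => (quantile μ u, quantile ν u))
    (volume.restrict (Ioo (0:ℝ) 1)) :=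
  (quantile_aemeas μ).prodMk (quantile_aemeas ν)

lemma quantileCoupling_eq : quantileCoupling μ ν
    = Measure.map (fun u => (quantile μ u, quantile ν u)) (volume.restrict (Ioo (0:ℝ) 1)) := by
  rw [quantileCoupling, restrict_Icc_eq]

lemma isCoupling_quantileCoupling : IsCoupling (quantileCoupling μ ν) μ ν := by
  constructor
  · rw [quantileCoupling_eq,
      AEMeasurable.map_map_of_aemeasurable measurable_fst.aemeasurable (pair_aemeas μ ν)]
    exact map_quantile μ
  · rw [quantileCoupling_eq,
      AEMeasurable.map_map_of_aemeasurable measurable_snd.aemeasurable (pair_aemeas μ ν)]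
    exact map_quantile ν

lemma ofReal_abs_eq (a b : ℝ) :
    (‖a - b‖₊ : ℝ≥0∞) = volume (Ico (min a b) (max a b)) := by
  rw [Real.volume_Ico, max_sub_min_eq_abs, ← enorm_eq_nnnorm, Real.enorm_eq_ofReal_abs, abs_sub_comm]

lemma ind_eq (c d t : ℝ) :
    (Ico c d).indicator (1 : ℝ → ℝ≥0∞) t
      = (Ici (0:ℝ)).indicator (1 : ℝ → ℝ≥0∞) (t - c)
        * (Ioi (0:ℝ)).indicator (1 : ℝ → ℝ≥0∞) (d - t) := by
  by_cases h1 : c ≤ t <;> by_cases h2 : t < d <;>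
    simp [Set.indicator_apply, mem_Ico, mem_Ici, mem_Ioi, sub_nonneg, sub_pos, h1, h2]

lemma vol_Ioc_inter_Ioo {a b : ℝ} (h0 : 0 ≤ a) (h1 : b ≤ 1) :
    volume (Ioc a b ∩ Ioo 0 1) = ENNReal.ofReal (b - a) := by
  apply le_antisymm
  · exact (measure_mono inter_subset_left).trans_eq Real.volume_Ioc
  · calc ENNReal.ofReal (b - a) = volume (Ioo a b) := Real.volume_Ioo.symm
    _ ≤ volume (Ioc a b ∩ Ioo 0 1) := measure_mono (fun u (hu : u ∈ Ioo a b) =>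
        ⟨⟨hu.1, hu.2.le⟩, lt_of_le_of_lt h0 hu.1, lt_of_lt_of_le hu.2 h1⟩)

lemma transportCost_quantileCoupling :
    transportCost (quantileCoupling μ ν) = ∫⁻ t, ENNReal.ofReal |cdf μ t - cdf ν t| := by
  rw [quantileCoupling_eq, transportCost,
    lintegral_map' (f := fun z : ℝ × ℝ => (‖z.1 - z.2‖₊ : ℝ≥0∞))
      (measurable_fst.sub measurable_snd).nnnorm.coe_nnreal_ennreal.aemeasurable (pair_aemeas μ ν)]
  have step1 : ∀ u : ℝ, (‖quantile μ u - quantile ν u‖₊ : ℝ≥0∞)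
      = ∫⁻ t, (Ico (min (quantile μ u) (quantile ν u))
          (max (quantile μ u) (quantile ν u))).indicator (1 : ℝ → ℝ≥0∞) t := fun u => by
    rw [ofReal_abs_eq, ← lintegral_indicator_one measurableSet_Ico]
  simp_rw [step1]
  -- measurability over the product
  have hm : AEMeasurable (fun p : ℝ × ℝ => min (quantile μ p.1) (quantile ν p.1))
      ((volume.restrict (Ioo (0:ℝ) 1)).prod volume) :=
    ((quantile_aemeas μ).min (quantile_aemeas ν)).comp_quasiMeasurePreserving
      Measure.quasiMeasurePreserving_fst
  have hM : AEMeasurable (fun p : ℝ × ℝ => max (quantile μ p.1) (quantile ν p.1))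
      ((volume.restrict (Ioo (0:ℝ) 1)).prod volume) :=
    ((quantile_aemeas μ).max (quantile_aemeas ν)).comp_quasiMeasurePreserving
      Measure.quasiMeasurePreserving_fst
  have hg1 : Measurable ((Ici (0:ℝ)).indicator (1 : ℝ → ℝ≥0∞)) :=
    measurable_one.indicator measurableSet_Ici
  have hg2 : Measurable ((Ioi (0:ℝ)).indicator (1 : ℝ → ℝ≥0∞)) :=
    measurable_one.indicator measurableSet_Ioi
  have hunc : AEMeasurable (Function.uncurry (fun u t : ℝ =>
      (Ico (min (quantile μ u) (quantile ν u))
        (max (quantile μ u) (quantile ν u))).indicator (1 : ℝ → ℝ≥0∞) t))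
      ((volume.restrict (Ioo (0:ℝ) 1)).prod volume) := by
    have : (Function.uncurry (fun u t : ℝ =>
        (Ico (min (quantile μ u) (quantile ν u))
          (max (quantile μ u) (quantile ν u))).indicator (1 : ℝ → ℝ≥0∞) t))
        = fun p : ℝ × ℝ =>
          (Ici (0:ℝ)).indicator (1 : ℝ → ℝ≥0∞)
            (p.2 - min (quantile μ p.1) (quantile ν p.1))
          * (Ioi (0:ℝ)).indicator (1 : ℝ → ℝ≥0∞)
            (max (quantile μ p.1) (quantile ν p.1) - p.2) := by
      funext p
      exact ind_eq _ _ _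
    rw [this]
    exact (hg1.comp_aemeasurable (measurable_snd.aemeasurable.sub hm)).mul
      (hg2.comp_aemeasurable (hM.sub measurable_snd.aemeasurable))
  rw [lintegral_lintegral_swap hunc]
  refine lintegral_congr fun t => ?_
  -- inner integral over u
  have hpt : ∀ u ∈ Ioo (0:ℝ) 1,
      (Ico (min (quantile μ u) (quantile ν u))
        (max (quantile μ u) (quantile ν u))).indicator (1 : ℝ → ℝ≥0∞) t
      = (Ioc (min (cdf μ t) (cdf ν t)) (max (cdf μ t) (cdf ν t))).indicator
          (1 : ℝ → ℝ≥0∞) u := by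
    intro u hu
    have h1 : quantile μ u ≤ t ↔ u ≤ cdf μ t := quantile_le_iff μ hu.1 hu.2
    have h2 : quantile ν u ≤ t ↔ u ≤ cdf ν t := quantile_le_iff ν hu.1 hu.2
    have hiff : t ∈ Ico (min (quantile μ u) (quantile ν u))
        (max (quantile μ u) (quantile ν u))
        ↔ u ∈ Ioc (min (cdf μ t) (cdf ν t)) (max (cdf μ t) (cdf ν t)) := by
      simp only [mem_Ico, mem_Ioc, ← not_le, min_le_iff, le_max_iff, max_le_iff,
        le_min_iff, h1, h2]
      tauto
    simp only [Set.indicator_apply, Pi.one_apply]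
    rw [if_congr hiff rfl rfl]
  rw [setLIntegral_congr_fun measurableSet_Ioo hpt,
    lintegral_indicator_one measurableSet_Ioc, Measure.restrict_apply' measurableSet_Ioo,
    vol_Ioc_inter_Ioo (le_min (cdf_nonneg μ t) (cdf_nonneg ν t))
      (max_le (cdf_le_one μ t) (cdf_le_one ν t)),
    max_sub_min_eq_abs, abs_sub_comm]

lemma prob_of_coupling (γ : Measure (ℝ × ℝ)) (hγ : IsCoupling γ μ ν) :
    IsProbabilityMeasure γ := by
  constructor
  calc γ Set.univ = γ (Prod.fst ⁻¹' Set.univ) := by rw [preimage_univ]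
  _ = (γ.map Prod.fst) Set.univ := (Measure.map_apply measurable_fst MeasurableSet.univ).symm
  _ = μ Set.univ := by rw [hγ.1]
  _ = 1 := measure_univ

lemma cdf_diff_le (γ : Measure (ℝ × ℝ)) (hγ : IsCoupling γ μ ν) (t : ℝ) :
    ENNReal.ofReal |cdf μ t - cdf ν t|
      ≤ γ {z : ℝ × ℝ | min z.1 z.2 ≤ t ∧ t < max z.1 z.2} := by
  have := prob_of_coupling μ ν γ hγ
  have hx : μ (Iic t) = γ {z : ℝ × ℝ | z.1 ≤ t} := by
    rw [← hγ.1, Measure.map_apply measurable_fst measurableSet_Iic]; rfl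
  have hy : ν (Iic t) = γ {z : ℝ × ℝ | z.2 ≤ t} := by
    rw [← hγ.2, Measure.map_apply measurable_snd measurableSet_Iic]; rfl
  set D := {z : ℝ × ℝ | min z.1 z.2 ≤ t ∧ t < max z.1 z.2} with hD
  have hsub1 : {z : ℝ × ℝ | z.1 ≤ t} ⊆ {z : ℝ × ℝ | z.2 ≤ t} ∪ D := by
    intro z hz
    by_cases h : z.2 ≤ t
    · exact Or.inl h
    · exact Or.inr ⟨le_trans (min_le_left _ _) hz,
        ((not_le.mp h).trans_le (le_max_right _ _) : t < max z.1 z.2)⟩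
  have hsub2 : {z : ℝ × ℝ | z.2 ≤ t} ⊆ {z : ℝ × ℝ | z.1 ≤ t} ∪ D := by
    intro z hz
    by_cases h : z.1 ≤ t
    · exact Or.inl h
    · exact Or.inr ⟨le_trans (min_le_right _ _) hz,
        ((not_le.mp h).trans_le (le_max_left _ _) : t < max z.1 z.2)⟩
  rcases le_total (cdf ν t) (cdf μ t) with h | h
  · rw [abs_of_nonneg (by linarith)]
    have heq : ENNReal.ofReal (cdf μ t - cdf ν t) = μ (Iic t) - ν (Iic t) := by
      rw [ENNReal.ofReal_sub _ (cdf_nonneg ν t), ofReal_cdf', ofReal_cdf']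
    rw [heq, hx, hy, tsub_le_iff_left]
    exact le_trans (measure_mono hsub1) (measure_union_le _ _)
  · rw [abs_of_nonpos (by linarith), neg_sub]
    have heq : ENNReal.ofReal (cdf ν t - cdf μ t) = ν (Iic t) - μ (Iic t) := by
      rw [ENNReal.ofReal_sub _ (cdf_nonneg μ t), ofReal_cdf', ofReal_cdf']
    rw [heq, hx, hy, tsub_le_iff_left]
    exact le_trans (measure_mono hsub2) (measure_union_le _ _)

lemma lower_bound (γ : Measure (ℝ × ℝ)) (hγ : IsCoupling γ μ ν) :
    (∫⁻ t, ENNReal.ofReal |cdf μ t - cdf ν t|) ≤ transportCost γ := by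
  have := prob_of_coupling μ ν γ hγ
  set S : Set (ℝ × (ℝ × ℝ)) :=
    {p : ℝ × (ℝ × ℝ) | min p.2.1 p.2.2 ≤ p.1 ∧ p.1 < max p.2.1 p.2.2} with hSdef
  have hS : MeasurableSet S := by
    apply MeasurableSet.inter
    · exact measurableSet_le
        ((measurable_fst.comp measurable_snd).min (measurable_snd.comp measurable_snd))
        measurable_fst
    · exact measurableSet_lt measurable_fst
        ((measurable_fst.comp measurable_snd).max (measurable_snd.comp measurable_snd))
  have hswap := lintegral_lintegral_swap (μ := (volume : Measure ℝ)) (ν := γ)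
    (f := fun t z => S.indicator (1 : ℝ × (ℝ × ℝ) → ℝ≥0∞) (t, z))
    ((measurable_one.indicator hS).aemeasurable)
  calc (∫⁻ t, ENNReal.ofReal |cdf μ t - cdf ν t|)
      ≤ ∫⁻ t, γ {z : ℝ × ℝ | min z.1 z.2 ≤ t ∧ t < max z.1 z.2} :=
        lintegral_mono fun t => cdf_diff_le μ ν γ hγ t
    _ = ∫⁻ t, ∫⁻ z, S.indicator (1 : ℝ × (ℝ × ℝ) → ℝ≥0∞) (t, z) ∂γ := by
        refine lintegral_congr fun t => ?_
        rw [show (fun z : ℝ × ℝ => S.indicator (1 : ℝ × (ℝ × ℝ) → ℝ≥0∞) (t, z))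
            = ((fun z : ℝ × ℝ => (t, z)) ⁻¹' S).indicator (1 : ℝ × ℝ → ℝ≥0∞) from rfl,
          lintegral_indicator_one (hS.preimage measurable_prodMk_left)]
        rfl
    _ = ∫⁻ z, ∫⁻ t, S.indicator (1 : ℝ × (ℝ × ℝ) → ℝ≥0∞) (t, z) ∂volume ∂γ := hswap
    _ = transportCost γ := by
        refine lintegral_congr fun z => ?_
        rw [show (fun t : ℝ => S.indicator (1 : ℝ × (ℝ × ℝ) → ℝ≥0∞) (t, z))
            = (Ico (min z.1 z.2) (max z.1 z.2)).indicator (1 : ℝ → ℝ≥0∞) from rfl,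
          lintegral_indicator_one measurableSet_Ico, ← ofReal_abs_eq]

end OneDimOT

/-- For `μ, ν ∈ P_1(ℝ)`, the law `γ̄` of `(F_μ†(U), F_ν†(U))`, with `U` uniform on `[0,1]`, is a
coupling of `μ` and `ν` which is optimal for `W_1`; moreover
`W_1(μ,ν) = ∫_{−∞}^{∞} |F_μ(t) − F_ν(t)| dt`. -/
theorem one_dimensional_quantile_coupling_optimal (μ ν : Measure ℝ)
    [IsProbabilityMeasure μ] [IsProbabilityMeasure ν]
    (hμ : finiteFirstMoment μ) (hν : finiteFirstMoment ν) :
    IsCoupling (quantileCoupling μ ν) μ ν ∧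
    transportCost (quantileCoupling μ ν) = wassersteinOne μ ν ∧
    wassersteinOne μ ν = ∫⁻ t, ENNReal.ofReal |cdf μ t - cdf ν t| := by
  have hcoup := OneDimOT.isCoupling_quantileCoupling μ ν
  have hB := OneDimOT.transportCost_quantileCoupling μ ν
  have hW : wassersteinOne μ ν = ∫⁻ t, ENNReal.ofReal |cdf μ t - cdf ν t| := by
    apply le_antisymm
    · exact le_trans (iInf_le _ ⟨quantileCoupling μ ν, hcoup⟩) (le_of_eq hB)
    · exact le_iInf fun g => OneDimOT.lower_bound μ ν (g : Measure (ℝ × ℝ)) g.2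
  exact ⟨hcoup, by rw [hB, hW], hW⟩
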